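/- Let K be a number field with ring of integers O_K and 𝔪 a nonzero ideal of O_K with absolute norm n. Let χ : (O_K/𝔪)ˣ → ℂˣ be a group homomorphism and let θ be a primitive Dirichlet character of conductor d (a Dirichlet character modulo d whose conductor equals d). Suppose that for every integer m, the value θ(m) (with θ extended by zero to integers not coprime to d) equals the value at the image of m in O_K/𝔪 of the extension-by-zero of χ (i.e., χ of that image if it is a unit, and 0 otherwise). Then d divides n. -/

import Mathlib

/-!
Since `absNorm 𝔪 ∈ 𝔪`, the image of an integer in `𝓞 K ⧸ 𝔪` depends only on its class
modulo `n`, so the hypothesis makes `θ` periodic on `ℤ` with period `n`. A Dirichlet character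
of level `d` that is `n`-periodic is trivial on the units of `ZMod d` that are `1` modulo
`gcd d n` (Bézout moves such a unit to `1` by adding a multiple of `n`), so it factors through
`gcd d n`; primitivity then forces `d ∣ gcd d n ∣ n`.
-/

open NumberField
open scoped Classical

theorem Int.exists_sub_mul_modEq_of_modEq_gcd {d n : ℕ} {a b : ℤ}
    (h : a ≡ b [ZMOD d.gcd n]) : ∃ k : ℤ, a - k * n ≡ b [ZMOD d] := by
  obtain ⟨c, hc⟩ := Int.modEq_iff_dvd.mp h.symm
  refine ⟨c * Nat.gcdB d n, Int.modEq_iff_dvd.mpr ⟨-(c * Nat.gcdA d n), ?_⟩⟩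
  rw [Nat.gcd_eq_gcd_ab] at hc
  linear_combination -hc

theorem Ideal.periodic_quotientMk_intCast {R : Type*} [CommRing R] {I : Ideal R} {c : ℕ}
    (hc : (c : R) ∈ I) : Function.Periodic (fun m : ℤ ↦ Ideal.Quotient.mk I (m : R)) c := by
  intro m
  simp only [Int.cast_add, Int.cast_natCast, map_add, Ideal.Quotient.eq_zero_iff_mem.mpr hc,
    add_zero]

namespace DirichletCharacter

variable {R : Type*} [CommMonoidWithZero R] {d : ℕ}

theorem factorsThrough_gcd_of_periodic [NeZero d] (χ : DirichletCharacter R d) {n : ℕ}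
    (h : Function.Periodic (fun m : ℤ ↦ χ m) n) : χ.FactorsThrough (d.gcd n) := by
  refine (factorsThrough_iff_ker_unitsMap (d.gcd_dvd_left n)).mpr fun u hu ↦ ?_
  obtain ⟨m, hm⟩ : ∃ m : ℤ, (m : ZMod d) = u := ⟨_, ZMod.intCast_zmod_cast _⟩
  have hm_gcd : m ≡ 1 [ZMOD d.gcd n] := by
    rw [← ZMod.intCast_eq_intCast_iff]
    simpa [MonoidHom.mem_ker, Units.ext_iff, ZMod.unitsMap_val, ← hm, ZMod.cast_intCast
      (d.gcd_dvd_left n)] using hu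
  obtain ⟨k, hk⟩ := Int.exists_sub_mul_modEq_of_modEq_gcd hm_gcd
  rw [← ZMod.intCast_eq_intCast_iff, Int.cast_one] at hk
  rw [MonoidHom.mem_ker, Units.ext_iff, MulChar.coe_toUnitHom, ← hm]
  calc χ (m : ZMod d) = χ ((m - k * n : ℤ) : ZMod d) := (h.sub_int_mul_eq k).symm
    _ = 1 := by rw [hk, map_one]

theorem level_ne_zero_of_periodic [Nontrivial R] (χ : DirichletCharacter R d) {n : ℕ}
    (hn : n ≠ 0) (h : Function.Periodic (fun m : ℤ ↦ χ m) n) : d ≠ 0 := by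
  rintro rfl
  have h_nonunit : ¬IsUnit (1 + n : ZMod 0) := by
    change ¬IsUnit (1 + n : ℤ)
    rw [Int.isUnit_iff]
    omega
  have h_one := h 1
  simp only [Int.cast_add, Int.cast_one, Int.cast_natCast, MulChar.map_nonunit χ h_nonunit,
    map_one] at h_one
  exact zero_ne_one h_one

theorem IsPrimitive.dvd_of_periodic [Nontrivial R] {χ : DirichletCharacter R d}
    (hχ : χ.IsPrimitive) {n : ℕ} (h : Function.Periodic (fun m : ℤ ↦ χ m) n) : d ∣ n := by
  rcases eq_or_ne n 0 with rfl | hn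
  · exact dvd_zero d
  have : NeZero d := ⟨χ.level_ne_zero_of_periodic hn h⟩
  have hd_gcd := χ.conductor_dvd_of_mem_conductorSet (χ.factorsThrough_gcd_of_periodic h)
  rw [hχ] at hd_gcd
  exact hd_gcd.trans (d.gcd_dvd_right n)

end DirichletCharacter

set_option synthInstance.maxHeartbeats 1000000 in
theorem conductor_dvd_absNorm_of_restriction_general (K : Type*) [Field K] [NumberField K]
    (𝔪 : Ideal (𝓞 K)) (n : ℕ) (hn : Ideal.absNorm 𝔪 = n)
    (d : ℕ) (θ : DirichletCharacter ℂ d) (hθ : θ.IsPrimitive)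
    (χ : ((𝓞 K) ⧸ 𝔪)ˣ →* ℂˣ)
    (h : ∀ m : ℤ, θ ((m : ℤ) : ZMod d) =
      if hu : IsUnit (Ideal.Quotient.mk 𝔪 (m : 𝓞 K)) then (χ hu.unit : ℂ) else 0) :
    d ∣ n := by
  have h_periodic : Function.Periodic (fun m : ℤ ↦ θ m) n := by
    have := (Ideal.periodic_quotientMk_intCast (hn ▸ Ideal.absNorm_mem 𝔪)).comp
      fun x ↦ if hu : IsUnit x then (χ hu.unit : ℂ) else 0
    simpa only [Function.comp_def, ← h] using this
  exact hθ.dvd_of_periodic h_periodic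

set_option synthInstance.maxHeartbeats 1000000 in
/-- If a character `χ` of `(𝓞 K ⧸ 𝔪)ˣ`, extended by zero, agrees on all integers
with a primitive Dirichlet character `θ` of conductor `d` (extended by zero), then
`d` divides the absolute norm `n` of `𝔪`. -/
theorem conductor_dvd_absNorm_of_restriction (K : Type*) [Field K] [NumberField K]
    (𝔪 : Ideal (𝓞 K)) (h𝔪 : 𝔪 ≠ 0) (n : ℕ) (hn : Ideal.absNorm 𝔪 = n)
    (d : ℕ) (θ : DirichletCharacter ℂ d) (hθ : θ.IsPrimitive)
    (χ : ((𝓞 K) ⧸ 𝔪)ˣ →* ℂˣ)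
    (h : ∀ m : ℤ, θ ((m : ℤ) : ZMod d) =
      if hu : IsUnit (Ideal.Quotient.mk 𝔪 (m : 𝓞 K)) then (χ hu.unit : ℂ) else 0) :
    d ∣ n :=
  conductor_dvd_absNorm_of_restriction_general K 𝔪 n hn d θ hθ χ h
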